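/- arXiv:1903.10745 — 8 statements merged into one kernel-verified Lean document; each statement's English description precedes it below -/
import Mathlib

section
/- Let n ≥ 2, let α ∈ ℂⁿ have all entries nonzero, and let x, y ∈ ℂⁿ. Suppose i, j, k ∈ {1,…,n} are mutually distinct, [i,j]_α = 0 and [i,k]_α = 0, and (x_i, y_i) ≠ (0,0). Then [j,k]_α = 0. -/
/-- The bilinear form `[i,j]_γ = x_i y_j − γ_i⁻¹ γ_j x_j y_i`. -/
noncomputable def br (γ x y : ℕ → ℂ) (i j : ℕ) : ℂ :=
  x i * y j - (γ i)⁻¹ * γ j * (x j * y i)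

theorem stmt0 (n : ℕ) (hn : 2 ≤ n) (α x y : ℕ → ℂ)
    (hα : ∀ i, 1 ≤ i → i ≤ n → α i ≠ 0)
    (i j k : ℕ) (hi1 : 1 ≤ i) (hin : i ≤ n) (hj1 : 1 ≤ j) (hjn : j ≤ n)
    (hk1 : 1 ≤ k) (hkn : k ≤ n)
    (hij : i ≠ j) (hik : i ≠ k) (hjk : j ≠ k)
    (h1 : br α x y i j = 0) (h2 : br α x y i k = 0)
    (hv : (x i, y i) ≠ (0, 0)) :
    br α x y j k = 0 := by
  have hai := hα i hi1 hin
  have haj := hα j hj1 hjn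
  have hak := hα k hk1 hkn
  unfold br at h1 h2 ⊢
  rw [sub_eq_zero] at h1 h2 ⊢
  field_simp at h1 h2 ⊢
  have hxy : x i ≠ 0 ∨ y i ≠ 0 := by
    by_contra h
    push_neg at h
    exact hv (by simp [h.1, h.2])
  rcases hxy with hx | hy
  · apply mul_left_cancel₀ (mul_ne_zero hx hai)
    linear_combination (α j * x j) * h2 - (α k * x k) * h1
  · apply mul_left_cancel₀ hy
    linear_combination y j * h2 - y k * h1
end

section
/- Let n ≥ 3, let α, β ∈ ℂⁿ have all entries nonzero, and let x, y ∈ ℂⁿ. Suppose that for every k with 2 ≤ k ≤ n one has ∑_{i=1}^{⌊k/2⌋} (−1)^{i−1} [i, k+1−i]_α = 0, and for every ℓ with 1 ≤ ℓ ≤ n−2 one has ∑_{m=0}^{⌊(ℓ−1)/2⌋} (−1)^m [n−ℓ+m, n−m]_β = 0. Then [j,k]_α = 0 for all j, k with k ≥ j+1 and k ≤ n+1−j, and [j,k]_β = 0 for all j, k with k ≥ j+1 and k > n+1−j. -/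
/-!
Multiplying `[i,j]_γ` by `γ_i` turns it into the `2 × 2` minor of the vectors
`w_i = (γ_i x_i, y_i)` and `w_j`, and the `β` conditions become the `α` conditions for the
reversed sequence `i ↦ n + 1 − i`. So it suffices to show: if for every `k ≤ K` a combination,
with nonzero coefficients, of the minors of `w_i, w_{k+1-i}` (`1 ≤ i ≤ k/2`) vanishes, then
`w_i ∥ w_j` whenever `i + j ≤ K + 1`. Let `w_p` be the first nonzero vector. By induction on `j`,
`w_j ∥ w_p` for `p + j ≤ K + 1`: in the condition for `k = p + j − 1` the terms with `i < p`
vanish because `w_i = 0`, and those with `i > p` because `w_i` and `w_{k+1-i}` are already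
parallel to `w_p`; only the minor of `w_p, w_j` is left. Finally, vectors parallel to the same
nonzero vector are parallel to each other.
-/

open Finset

section Minor

variable {R : Type*} [CommRing R]

def minor (u v : ℕ → R) (i j : ℕ) : R :=
  u i * v j - u j * v i

theorem minor_swap (u v : ℕ → R) (i j : ℕ) : minor u v j i = -minor u v i j := by
  simp only [minor]; ring

theorem minor_comp (u v : ℕ → R) (f : ℕ → ℕ) (i j : ℕ) :
    minor (u ∘ f) (v ∘ f) i j = minor u v (f i) (f j) :=
  rfl

theorem minor_eq_zero_of_eq_zero {u v : ℕ → R} {i : ℕ} (hu : u i = 0) (hv : v i = 0) (j : ℕ) :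
    minor u v i j = 0 := by
  simp [minor, hu, hv]

variable [IsDomain R]

theorem minor_eq_zero_trans {u v : ℕ → R} {m a b : ℕ} (hm : u m ≠ 0 ∨ v m ≠ 0)
    (ha : minor u v m a = 0) (hb : minor u v m b = 0) : minor u v a b = 0 := by
  unfold minor at *
  rcases hm with hm | hm
  · exact mul_left_cancel₀ hm (by linear_combination u a * hb - u b * ha)
  · exact mul_left_cancel₀ hm (by linear_combination v a * hb - v b * ha)

theorem minor_eq_zero_of_first_ne_zero {u v : ℕ → R} {K : ℕ} {c : ℕ → ℕ → R}
    (hc : ∀ k i, 1 ≤ i → 2 * i ≤ k → k ≤ K → c k i ≠ 0)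
    (H : ∀ k, 2 ≤ k → k ≤ K → ∑ i ∈ Icc 1 (k / 2), c k i * minor u v i (k + 1 - i) = 0)
    {p : ℕ} (hp : 1 ≤ p) (hzero : ∀ i, 1 ≤ i → i < p → u i = 0 ∧ v i = 0)
    (hpne : u p ≠ 0 ∨ v p ≠ 0) (j : ℕ) (hpj : p < j) (hjK : p + j ≤ K + 1) :
    minor u v p j = 0 := by
  induction j using Nat.strong_induction_on with
  | _ j IH =>
    have hsum := H (p + j - 1) (by omega) (by omega)
    rw [sum_eq_single_of_mem p (by simp only [mem_Icc]; omega)] at hsum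
    · rw [show p + j - 1 + 1 - p = j by omega] at hsum
      exact (mul_eq_zero.mp hsum).resolve_left (hc _ _ hp (by omega) (by omega))
    intro i hi hip
    simp only [mem_Icc] at hi
    refine mul_eq_zero_of_right _ ?_
    rcases lt_or_gt_of_ne hip with hlt | hgt
    · exact minor_eq_zero_of_eq_zero (hzero i hi.1 hlt).1 (hzero i hi.1 hlt).2 _
    · exact minor_eq_zero_trans hpne (IH i (by omega) hgt (by omega))
        (IH _ (by omega) (by omega) (by omega))

theorem minor_eq_zero_of_triangular {u v : ℕ → R} {K : ℕ} {c : ℕ → ℕ → R}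
    (hc : ∀ k i, 1 ≤ i → 2 * i ≤ k → k ≤ K → c k i ≠ 0)
    (H : ∀ k, 2 ≤ k → k ≤ K → ∑ i ∈ Icc 1 (k / 2), c k i * minor u v i (k + 1 - i) = 0)
    {i j : ℕ} (hi : 1 ≤ i) (hij : i < j) (hijK : i + j ≤ K + 1) :
    minor u v i j = 0 := by
  classical
  by_cases hex : ∃ p, 1 ≤ p ∧ p ≤ i ∧ (u p ≠ 0 ∨ v p ≠ 0)
  · obtain ⟨hp, hpi, hpne⟩ := Nat.find_spec hex
    have hzero : ∀ i', 1 ≤ i' → i' < Nat.find hex → u i' = 0 ∧ v i' = 0 := fun i' hi' hi'p => by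
      simpa [hi', (hi'p.trans_le hpi).le] using Nat.find_min hex hi'p
    have hpj := minor_eq_zero_of_first_ne_zero hc H hp hzero hpne j (by omega) (by omega)
    rcases hpi.eq_or_lt with hpi | hpi
    · exact hpi ▸ hpj
    · exact minor_eq_zero_trans hpne
        (minor_eq_zero_of_first_ne_zero hc H hp hzero hpne i hpi (by omega)) hpj
  · push Not at hex
    exact minor_eq_zero_of_eq_zero (hex i hi le_rfl).1 (hex i hi le_rfl).2 j

end Minor

theorem br_eq_inv_mul_minor {γ : ℕ → ℂ} {i : ℕ} (hγ : γ i ≠ 0) (x y : ℕ → ℂ) (j : ℕ) :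
    br γ x y i j = (γ i)⁻¹ * minor (γ * x) y i j := by
  simp only [br, minor, Pi.mul_apply]
  field_simp

theorem minor_mul_eq_zero_of_sum_br_eq_zero {n : ℕ} {α x y : ℕ → ℂ}
    (hα : ∀ i, 1 ≤ i → i ≤ n → α i ≠ 0)
    (heqα : ∀ k, 2 ≤ k → k ≤ n →
      ∑ i ∈ Icc 1 (k / 2), (-1 : ℂ) ^ (i - 1) * br α x y i (k + 1 - i) = 0)
    {j k : ℕ} (hj : 1 ≤ j) (hjk : j < k) (hjkn : j + k ≤ n + 1) :
    minor (α * x) y j k = 0 := by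
  refine minor_eq_zero_of_triangular (c := fun _ i => (-1) ^ (i - 1) * (α i)⁻¹)
    (fun k i hi hik hk => mul_ne_zero (neg_one_pow_ne_zero _) (inv_ne_zero (hα i hi (by omega))))
    (fun k hk2 hkn => ?_) hj hjk hjkn
  rw [← heqα k hk2 hkn]
  refine sum_congr rfl fun i hi => ?_
  simp only [mem_Icc] at hi
  rw [br_eq_inv_mul_minor (hα i hi.1 (by omega)), mul_assoc]

theorem minor_mul_eq_zero_of_sum_br_rev_eq_zero {n : ℕ} {β x y : ℕ → ℂ}
    (hβ : ∀ i, 1 ≤ i → i ≤ n → β i ≠ 0)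
    (heqβ : ∀ l, 1 ≤ l → l ≤ n - 2 →
      ∑ m ∈ range ((l - 1) / 2 + 1), (-1 : ℂ) ^ m * br β x y (n - l + m) (n - m) = 0)
    {j k : ℕ} (hj : 1 ≤ j) (hjk : j < k) (hkn : k ≤ n) (hnjk : n + 1 < j + k) :
    minor (β * x) y j k = 0 := by
  let rev : ℕ → ℕ := fun i => n + 1 - i
  have hrev := minor_eq_zero_of_triangular (u := (β * x) ∘ rev) (v := y ∘ rev) (K := n - 1)
    (c := fun k i => (-1) ^ i * (β (n + i - k))⁻¹)
    (fun k i hi hik hk =>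
      mul_ne_zero (neg_one_pow_ne_zero _) (inv_ne_zero (hβ _ (by omega) (by omega))))
    (fun k hk2 hkn => ?_) (i := n + 1 - k) (j := n + 1 - j) (by omega) (by omega) (by omega)
  · have hk : rev (n + 1 - k) = k := by simp only [rev]; omega
    have hj' : rev (n + 1 - j) = j := by simp only [rev]; omega
    rwa [minor_comp, hk, hj', minor_swap, neg_eq_zero] at hrev
  rw [← heqβ (k - 1) (by omega) (by omega), ← Ico_add_one_right_eq_Icc, sum_Ico_eq_sum_range,
    show k / 2 + 1 - 1 = (k - 1 - 1) / 2 + 1 by omega]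
  refine sum_congr rfl fun m hm => ?_
  simp only [mem_range] at hm
  have hrev₁ : rev (1 + m) = n - m := by simp only [rev]; omega
  have hrev₂ : rev (k + 1 - (1 + m)) = n - (k - 1) + m := by simp only [rev]; omega
  rw [minor_comp, hrev₁, hrev₂, minor_swap, show n + (1 + m) - k = n - (k - 1) + m by omega,
    br_eq_inv_mul_minor (hβ _ (by omega) (by omega)), pow_add]
  ring

theorem stmt1_general (n : ℕ) (α β x y : ℕ → ℂ)
    (hα : ∀ i, 1 ≤ i → i ≤ n → α i ≠ 0)
    (hβ : ∀ i, 1 ≤ i → i ≤ n → β i ≠ 0)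
    (heqα : ∀ k, 2 ≤ k → k ≤ n →
      ∑ i ∈ Finset.Icc 1 (k / 2), (-1 : ℂ) ^ (i - 1) * br α x y i (k + 1 - i) = 0)
    (heqβ : ∀ l, 1 ≤ l → l ≤ n - 2 →
      ∑ m ∈ Finset.range ((l - 1) / 2 + 1), (-1 : ℂ) ^ m * br β x y (n - l + m) (n - m) = 0) :
    (∀ j k, 1 ≤ j → j + 1 ≤ k → k ≤ n + 1 - j → br α x y j k = 0) ∧
    (∀ j k, 1 ≤ j → j + 1 ≤ k → k ≤ n → n + 1 - j < k → br β x y j k = 0) := by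
  refine ⟨fun j k hj hjk hkn => ?_, fun j k hj hjk hkn hnjk => ?_⟩
  · rw [br_eq_inv_mul_minor (hα j hj (by omega)),
      minor_mul_eq_zero_of_sum_br_eq_zero hα heqα hj hjk (by omega), mul_zero]
  · rw [br_eq_inv_mul_minor (hβ j hj (by omega)),
      minor_mul_eq_zero_of_sum_br_rev_eq_zero hβ heqβ hj hjk hkn (by omega), mul_zero]

theorem stmt1 (n : ℕ) (hn : 3 ≤ n) (α β x y : ℕ → ℂ)
    (hα : ∀ i, 1 ≤ i → i ≤ n → α i ≠ 0)
    (hβ : ∀ i, 1 ≤ i → i ≤ n → β i ≠ 0)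
    (heqα : ∀ k, 2 ≤ k → k ≤ n →
      ∑ i ∈ Finset.Icc 1 (k / 2), (-1 : ℂ) ^ (i - 1) * br α x y i (k + 1 - i) = 0)
    (heqβ : ∀ l, 1 ≤ l → l ≤ n - 2 →
      ∑ m ∈ Finset.range ((l - 1) / 2 + 1), (-1 : ℂ) ^ m * br β x y (n - l + m) (n - m) = 0) :
    (∀ j k, 1 ≤ j → j + 1 ≤ k → k ≤ n + 1 - j → br α x y j k = 0) ∧
    (∀ j k, 1 ≤ j → j + 1 ≤ k → k ≤ n → n + 1 - j < k → br β x y j k = 0) :=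
  stmt1_general n α β x y hα hβ heqα heqβ
end

section
/- Let n ≥ 3, let α, β ∈ ℂⁿ have all entries nonzero, write α_{i,j} = α_i⁻¹α_j and β_{i,j} = β_i⁻¹β_j, and assume α_{i,j} ≠ β_{i,j} for all 1 ≤ i < j ≤ n. Suppose x, y ∈ ℂⁿ satisfy the system (eq). Then, writing v_j = (x_j, y_j) ∈ ℂ², at least one of the following holds: (i) x = 0 or y = 0; (ii) there exist t ∈ ℂ, t ≠ 0, and c_j ∈ ℂ such that v_j = (c_j t, c_j α_j) for every j ≤ (n+1)/2 and v_j = (0,0) for every j > (n+1)/2; (iii) there exist indices p, q with p ≤ n−q+1 < (n+1)/2, t ∈ ℂ, t ≠ 0, and c_j ∈ ℂ with c_p ≠ 0 and c_q ≠ 0, such that v_j = (c_j t, c_j α_j) for every j with p ≤ j ≤ n−q+1 and for j = q, and v_j = (0,0) for every j with j < p, with n−q+1 < j < q, or with j > q; (iv) there exist indices p, q with (n+3)/2 < n−p+2 ≤ q ≤ n, t ∈ ℂ, t ≠ 0, and c_j ∈ ℂ with c_p ≠ 0 and c_q ≠ 0, such that v_j = (c_j t, c_j β_j) for j = p and for every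 j with n−p+2 ≤ j ≤ q, and v_j = (0,0) for every j with j < p, with p < j ≤ n−p+1, or with j > q; (v) there exist t ∈ ℂ, t ≠ 0, and c_j ∈ ℂ such that v_j = (c_j t, c_j β_j) for every j ≥ (n+1)/2 and v_j = (0,0) for every j < (n+1)/2. -/
lemma br_zero_left {γ x y : ℕ → ℂ} {i j : ℕ} (hx : x i = 0) (hy : y i = 0) :
    br γ x y i j = 0 := by simp [br, hx, hy]

lemma br_zero_right {γ x y : ℕ → ℂ} {i j : ℕ} (hx : x j = 0) (hy : y j = 0) :
    br γ x y i j = 0 := by simp [br, hx, hy]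

lemma br_eq_zero_iff {γ x y : ℕ → ℂ} {i j : ℕ} (hγ : γ i ≠ 0) :
    br γ x y i j = 0 ↔ γ i * (x i * y j) = γ j * (x j * y i) := by
  rw [br, sub_eq_zero]
  constructor
  · intro h
    calc γ i * (x i * y j) = γ i * ((γ i)⁻¹ * γ j * (x j * y i)) := by rw [h]
      _ = γ j * (x j * y i) := by field_simp
  · intro h
    field_simp
    linear_combination h

lemma mul3l {a b c : ℂ} (h : a * (b * c) = 0) (ha : a ≠ 0) (hc : c ≠ 0) : b = 0 := by
  simpa [ha, hc, mul_eq_zero] using h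

lemma mul3r {a b c : ℂ} (h : a * (b * c) = 0) (ha : a ≠ 0) (hb : b ≠ 0) : c = 0 := by
  simpa [ha, hb, mul_eq_zero] using h

lemma par {γ x y : ℕ → ℂ} {p a b : ℕ} (hγp : γ p ≠ 0) (hγa : γ a ≠ 0) (hγb : γ b ≠ 0)
    (hv : ¬ (x p = 0 ∧ y p = 0))
    (e1 : γ p * (x p * y a) = γ a * (x a * y p))
    (e2 : γ p * (x p * y b) = γ b * (x b * y p)) :
    γ a * (x a * y b) = γ b * (x b * y a) := by
  by_cases hxp : x p = 0
  · have hyp : y p ≠ 0 := fun h => hv ⟨hxp, h⟩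
    have ha : x a = 0 := by
      have h1 : γ a * (x a * y p) = 0 := by rw [← e1, hxp]; ring
      exact mul3l (by linear_combination h1) hγa hyp
    have hb : x b = 0 := by
      have h1 : γ b * (x b * y p) = 0 := by rw [← e2, hxp]; ring
      exact mul3l (by linear_combination h1) hγb hyp
    rw [ha, hb]; ring
  · have key : (γ p * x p) * (γ a * (x a * y b)) = (γ p * x p) * (γ b * (x b * y a)) := by
      linear_combination (γ a * x a) * e2 - (γ b * x b) * e1
    exact mul_left_cancel₀ (mul_ne_zero hγp hxp) key

theorem stmt2 (n : ℕ) (hn : 3 ≤ n) (α β x y : ℕ → ℂ)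
    (hα : ∀ i, 1 ≤ i → i ≤ n → α i ≠ 0)
    (hβ : ∀ i, 1 ≤ i → i ≤ n → β i ≠ 0)
    (hαβ : ∀ i j, 1 ≤ i → i < j → j ≤ n → (α i)⁻¹ * α j ≠ (β i)⁻¹ * β j)
    (heqα : ∀ k, 2 ≤ k → k ≤ n →
      ∑ i ∈ Finset.Icc 1 (k / 2), (-1 : ℂ) ^ (i - 1) * br α x y i (k + 1 - i) = 0)
    (heqβ : ∀ l, 1 ≤ l → l ≤ n - 2 →
      ∑ m ∈ Finset.range ((l - 1) / 2 + 1), (-1 : ℂ) ^ m * br β x y (n - l + m) (n - m) = 0) :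
    -- (i) x = 0 or y = 0
    ((∀ i, 1 ≤ i → i ≤ n → x i = 0) ∨ (∀ i, 1 ≤ i → i ≤ n → y i = 0)) ∨
    -- (ii) v_j = (c_j t, c_j α_j) for j ≤ (n+1)/2 and v_j = 0 for j > (n+1)/2
    (∃ t : ℂ, t ≠ 0 ∧ ∃ c : ℕ → ℂ, ∀ j, 1 ≤ j → j ≤ n →
      (2 * j ≤ n + 1 → x j = c j * t ∧ y j = c j * α j) ∧
      (n + 1 < 2 * j → x j = 0 ∧ y j = 0)) ∨
    -- (iii)
    (∃ p q : ℕ, 1 ≤ p ∧ q ≤ n ∧ p ≤ n - q + 1 ∧ 2 * (n - q + 1) < n + 1 ∧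
      ∃ t : ℂ, t ≠ 0 ∧ ∃ c : ℕ → ℂ, c p ≠ 0 ∧ c q ≠ 0 ∧
        (∀ j, ((p ≤ j ∧ j ≤ n - q + 1) ∨ j = q) → x j = c j * t ∧ y j = c j * α j) ∧
        (∀ j, 1 ≤ j → j ≤ n → (j < p ∨ (n - q + 1 < j ∧ j < q) ∨ q < j) →
          x j = 0 ∧ y j = 0)) ∨
    -- (iv)
    (∃ p q : ℕ, 1 ≤ p ∧ q ≤ n ∧ n + 3 < 2 * (n - p + 2) ∧ n - p + 2 ≤ q ∧
      ∃ t : ℂ, t ≠ 0 ∧ ∃ c : ℕ → ℂ, c p ≠ 0 ∧ c q ≠ 0 ∧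
        (∀ j, (j = p ∨ (n - p + 2 ≤ j ∧ j ≤ q)) → x j = c j * t ∧ y j = c j * β j) ∧
        (∀ j, 1 ≤ j → j ≤ n → (j < p ∨ (p < j ∧ j ≤ n - p + 1) ∨ q < j) →
          x j = 0 ∧ y j = 0)) ∨
    -- (v) v_j = (c_j t, c_j β_j) for j ≥ (n+1)/2 and v_j = 0 for j < (n+1)/2
    (∃ t : ℂ, t ≠ 0 ∧ ∃ c : ℕ → ℂ, ∀ j, 1 ≤ j → j ≤ n →
      (n + 1 ≤ 2 * j → x j = c j * t ∧ y j = c j * β j) ∧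
      (2 * j < n + 1 → x j = 0 ∧ y j = 0)) := by
  by_cases hx0 : ∀ i, 1 ≤ i → i ≤ n → x i = 0
  · exact Or.inl (Or.inl hx0)
  push_neg at hx0
  obtain ⟨i0, hi01, hi0n, hxi0⟩ := hx0
  -- support set
  set S := (Finset.Icc 1 n).filter (fun j => ¬(x j = 0 ∧ y j = 0)) with hS
  have hSne : S.Nonempty := ⟨i0, by
    simp only [hS, Finset.mem_filter, Finset.mem_Icc]
    exact ⟨⟨hi01, hi0n⟩, fun h => hxi0 h.1⟩⟩
  set p := S.min' hSne with hpdef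
  set q := S.max' hSne with hqdef
  have hpS : p ∈ S := S.min'_mem hSne
  have hqS : q ∈ S := S.max'_mem hSne
  have hpmem := hpS
  have hqmem := hqS
  rw [hS, Finset.mem_filter, Finset.mem_Icc] at hpmem hqmem
  obtain ⟨⟨hp1, hpn⟩, vp⟩ := hpmem
  obtain ⟨⟨hq1, hqn⟩, vq⟩ := hqmem
  have hpq : p ≤ q := S.min'_le q hqS
  have Zlo : ∀ j, 1 ≤ j → j < p → x j = 0 ∧ y j = 0 := by
    intro j h1 hjp
    by_contra h
    have hjS : j ∈ S := by
      rw [hS, Finset.mem_filter, Finset.mem_Icc]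
      exact ⟨⟨h1, by omega⟩, h⟩
    exact absurd (S.min'_le j hjS) (by omega)
  have Zhi : ∀ j, q < j → j ≤ n → x j = 0 ∧ y j = 0 := by
    intro j hqj h2
    by_contra h
    have hjS : j ∈ S := by
      rw [hS, Finset.mem_filter, Finset.mem_Icc]
      exact ⟨⟨by omega, h2⟩, h⟩
    exact absurd (S.le_max' j hjS) (by omega)
  have hαp : α p ≠ 0 := hα p hp1 hpn
  have hβq : β q ≠ 0 := hβ q hq1 hqn
  -- L1 : α-parallelism from p
  have L1 : ∀ j, p < j → p + j ≤ n + 1 → α p * (x p * y j) = α j * (x j * y p) := by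
    intro j
    induction j using Nat.strong_induction_on with
    | _ j IH =>
      intro hpj hjn
      have heq := heqα (p + j - 1) (by omega) (by omega)
      have hmem : p ∈ Finset.Icc 1 ((p + j - 1) / 2) := by
        rw [Finset.mem_Icc]; omega
      have hcol : ∀ i ∈ Finset.Icc 1 ((p + j - 1) / 2), i ≠ p →
          (-1 : ℂ) ^ (i - 1) * br α x y i (p + j - 1 + 1 - i) = 0 := by
        intro i hi hne
        rw [Finset.mem_Icc] at hi
        rcases lt_or_gt_of_ne hne with hlt | hgt
        · rw [br_zero_left (Zlo i hi.1 hlt).1 (Zlo i hi.1 hlt).2, mul_zero]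
        · have hij : i < j := by omega
          have hb : p + j - 1 + 1 - i = p + j - i := by omega
          rw [hb]
          have e1 := IH i hij hgt (by omega)
          have e2 := IH (p + j - i) (by omega) (by omega) (by omega)
          have hres := par hαp (hα i (by omega) (by omega)) (hα (p + j - i) (by omega) (by omega)) vp e1 e2
          rw [(br_eq_zero_iff (hα i (by omega) (by omega))).mpr hres, mul_zero]
      rw [Finset.sum_eq_single_of_mem p hmem hcol] at heq
      have hj' : p + j - 1 + 1 - p = j := by omega
      rw [hj'] at heq
      have hbr : br α x y p j = 0 :=
        (mul_eq_zero.mp heq).resolve_left (pow_ne_zero _ (by norm_num))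
      exact (br_eq_zero_iff hαp).mp hbr
  -- L2 : β-parallelism towards q
  have L2 : ∀ j, j < q → n + 2 ≤ j + q → β j * (x j * y q) = β q * (x q * y j) := by
    have key : ∀ d j, q - j ≤ d → j < q → n + 2 ≤ j + q →
        β j * (x j * y q) = β q * (x q * y j) := by
      intro d
      induction d with
      | zero => intro j h1 h2 _; exact absurd h2 (by omega)
      | succ d IH =>
        intro j hd hjq hsum2
        have heq := heqβ (2 * n - j - q) (by omega) (by omega)
        have hmem : n - q ∈ Finset.range ((2 * n - j - q - 1) / 2 + 1) := by
          rw [Finset.mem_range]; omega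
        have hcol : ∀ m ∈ Finset.range ((2 * n - j - q - 1) / 2 + 1), m ≠ n - q →
            (-1 : ℂ) ^ m * br β x y (n - (2 * n - j - q) + m) (n - m) = 0 := by
          intro m hm hne
          rw [Finset.mem_range] at hm
          rcases lt_or_gt_of_ne hne with hlt | hgt
          · have hz := Zhi (n - m) (by omega) (by omega)
            rw [br_zero_right hz.1 hz.2, mul_zero]
          · have e1 := IH (n - (2 * n - j - q) + m) (by omega) (by omega) (by omega)
            have e2 := IH (n - m) (by omega) (by omega) (by omega)
            have hβa := hβ (n - (2 * n - j - q) + m) (by omega) (by omega)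
            have hβb := hβ (n - m) (by omega) (by omega)
            have hres := par hβq hβa hβb vq e1.symm e2.symm
            rw [(br_eq_zero_iff hβa).mpr hres, mul_zero]
        rw [Finset.sum_eq_single_of_mem (n - q) hmem hcol] at heq
        have h1 : n - (2 * n - j - q) + (n - q) = j := by omega
        have h2 : n - (n - q) = q := by omega
        rw [h1, h2] at heq
        have hbr : br β x y j q = 0 :=
          (mul_eq_zero.mp heq).resolve_left (pow_ne_zero _ (by norm_num))
        exact (br_eq_zero_iff (hβ j (by omega) (by omega))).mp hbr
    intro j h1 h2
    exact key (q - j) j le_rfl h1 h2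
  by_cases hA : p + q ≤ n + 1
  · -- α side
    by_cases hxp : x p = 0
    · refine Or.inl (Or.inl ?_)
      have hyp : y p ≠ 0 := fun h => vp ⟨hxp, h⟩
      intro i h1 h2
      rcases lt_trichotomy i p with h | h | h
      · exact (Zlo i h1 h).1
      · rw [h]; exact hxp
      · by_cases hiq : q < i
        · exact (Zhi i hiq h2).1
        · have e := L1 i h (by omega)
          rw [hxp] at e
          exact mul3l (by linear_combination -e) (hα i h1 h2) hyp
    · by_cases hyp : y p = 0
      · refine Or.inl (Or.inr ?_)
        intro i h1 h2
        rcases lt_trichotomy i p with h | h | h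
        · exact (Zlo i h1 h).2
        · rw [h]; exact hyp
        · by_cases hiq : q < i
          · exact (Zhi i hiq h2).2
          · have e := L1 i h (by omega)
            rw [hyp] at e
            exact mul3r (by linear_combination e) hαp hxp
      · -- x p ≠ 0, y p ≠ 0 : α line
        have htne : (α p * x p / y p : ℂ) ≠ 0 :=
          div_ne_zero (mul_ne_zero hαp hxp) hyp
        have lineα : ∀ j, p ≤ j → p + j ≤ n + 1 →
            x j = (y j / α j) * (α p * x p / y p) ∧ y j = (y j / α j) * α j := by
          intro j hpj hjn
          have hαj : α j ≠ 0 := hα j (by omega) (by omega)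
          refine ⟨?_, (div_mul_cancel₀ (y j) hαj).symm⟩
          rcases eq_or_lt_of_le hpj with h | h
          · rw [← h, div_mul_div_comm, eq_div_iff (mul_ne_zero hαp hyp)]
            ring
          · have e := L1 j h hjn
            rw [div_mul_div_comm, eq_div_iff (mul_ne_zero hαj hyp)]
            linear_combination -e
        by_cases hq2 : 2 * q ≤ n + 1
        · -- case (ii)
          refine Or.inr (Or.inl ⟨α p * x p / y p, htne, fun j => y j / α j, ?_⟩)
          intro j h1 h2
          constructor
          · intro hj
            by_cases hjp : j < p
            · have hz := Zlo j h1 hjp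
              simp [hz.1, hz.2]
            · exact lineα j (by omega) (by omega)
          · intro hj
            exact Zhi j (by omega) h2
        · -- case (iii)
          push_neg at hq2
          have hlq := lineα q hpq (by omega)
          have hcq : y q / α q ≠ 0 := by
            intro h
            exact vq ⟨by rw [hlq.1, h, zero_mul], by rw [hlq.2, h, zero_mul]⟩
          have hxq : x q ≠ 0 := by rw [hlq.1]; exact mul_ne_zero hcq htne
          have hyq : y q ≠ 0 := by rw [hlq.2]; exact mul_ne_zero hcq (hα q hq1 hqn)
          refine Or.inr (Or.inr (Or.inl ⟨p, q, hp1, hqn, by omega, by omega,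
            α p * x p / y p, htne, fun j => y j / α j, div_ne_zero hyp hαp, hcq, ?_, ?_⟩))
          · intro j hj
            rcases hj with ⟨hj1, hj2⟩ | rfl
            · exact lineα j hj1 (by omega)
            · exact lineα q hpq (by omega)
          · intro j h1 h2 hj
            rcases hj with h | ⟨hm1, hm2⟩ | h
            · exact Zlo j h1 h
            · have eβ := L2 j hm2 (by omega)
              have e1 := L1 j (by omega) (by omega)
              have e2 := L1 q (by omega) (by omega)
              have hαj := hα j (by omega) (by omega)
              have hβj := hβ j (by omega) (by omega)
              have eα := par hαp hαj (hα q hq1 hqn) vp e1 e2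
              have h0 : (β j * α q - α j * β q) * (x q * y j) = 0 := by
                linear_combination α j * eβ - β j * eα
              have hne : β j * α q - α j * β q ≠ 0 := by
                intro h
                apply hαβ j q (by omega) hm2 hqn
                rw [inv_mul_eq_div, inv_mul_eq_div, div_eq_div_iff hαj hβj]
                linear_combination h
              have hyj : y j = 0 := mul3r (by linear_combination h0) hne hxq
              have hxj : x j = 0 := by
                have h3 : α j * (x j * y q) = 0 := by rw [eα, hyj]; ring
                exact mul3l h3 hαj hyq
              exact ⟨hxj, hyj⟩
            · exact Zhi j h h2
  · -- β side
    push_neg at hA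
    by_cases hxq : x q = 0
    · refine Or.inl (Or.inl ?_)
      have hyq : y q ≠ 0 := fun h => vq ⟨hxq, h⟩
      intro i h1 h2
      rcases lt_trichotomy i q with h | h | h
      · by_cases hip : i < p
        · exact (Zlo i h1 hip).1
        · have e := L2 i h (by omega)
          rw [hxq] at e
          have h3 : β i * (x i * y q) = 0 := by rw [e]; ring
          exact mul3l h3 (hβ i h1 h2) hyq
      · rw [h]; exact hxq
      · exact (Zhi i h h2).1
    · by_cases hyq : y q = 0
      · refine Or.inl (Or.inr ?_)
        intro i h1 h2
        rcases lt_trichotomy i q with h | h | h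
        · by_cases hip : i < p
          · exact (Zlo i h1 hip).2
          · have e := L2 i h (by omega)
            rw [hyq] at e
            have h3 : β q * (x q * y i) = 0 := by rw [← e]; ring
            exact mul3r h3 hβq hxq
        · rw [h]; exact hyq
        · exact (Zhi i h h2).2
      · -- x q ≠ 0, y q ≠ 0 : β line
        have htne : (β q * x q / y q : ℂ) ≠ 0 :=
          div_ne_zero (mul_ne_zero hβq hxq) hyq
        have lineβ : ∀ j, j ≤ q → n + 2 ≤ j + q →
            x j = (y j / β j) * (β q * x q / y q) ∧ y j = (y j / β j) * β j := by
          intro j hjq hjn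
          have hβj : β j ≠ 0 := hβ j (by omega) (by omega)
          refine ⟨?_, (div_mul_cancel₀ (y j) hβj).symm⟩
          rcases eq_or_lt_of_le hjq with h | h
          · rw [h, div_mul_div_comm, eq_div_iff (mul_ne_zero hβq hyq)]
            ring
          · have e := L2 j h hjn
            rw [div_mul_div_comm, eq_div_iff (mul_ne_zero hβj hyq)]
            linear_combination e
        by_cases hp2 : n + 1 ≤ 2 * p
        · -- case (v)
          refine Or.inr (Or.inr (Or.inr (Or.inr ⟨β q * x q / y q, htne, fun j => y j / β j, ?_⟩)))
          intro j h1 h2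
          constructor
          · intro hj
            by_cases hjp : j < p
            · have hz := Zlo j h1 hjp
              simp [hz.1, hz.2]
            · by_cases hjq : q < j
              · have hz := Zhi j hjq h2
                simp [hz.1, hz.2]
              · exact lineβ j (by omega) (by omega)
          · intro hj
            exact Zlo j h1 (by omega)
        · -- case (iv)
          push_neg at hp2
          have hlp := lineβ p (by omega) (by omega)
          have hcp : y p / β p ≠ 0 := by
            intro h
            exact vp ⟨by rw [hlp.1, h, zero_mul], by rw [hlp.2, h, zero_mul]⟩
          have hxp : x p ≠ 0 := by rw [hlp.1]; exact mul_ne_zero hcp htne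
          have hyp : y p ≠ 0 := by rw [hlp.2]; exact mul_ne_zero hcp (hβ p hp1 hpn)
          refine Or.inr (Or.inr (Or.inr (Or.inl ⟨p, q, hp1, hqn, by omega, by omega,
            β q * x q / y q, htne, fun j => y j / β j, hcp, div_ne_zero hyq hβq, ?_, ?_⟩)))
          · intro j hj
            rcases hj with rfl | ⟨hj1, hj2⟩
            · exact hlp
            · exact lineβ j hj2 (by omega)
          · intro j h1 h2 hj
            rcases hj with h | ⟨hm1, hm2⟩ | h
            · exact Zlo j h1 h
            · have hjq : j < q := by omega
              have eα := L1 j (by omega) (by omega)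
              have hαj := hα j (by omega) (by omega)
              have hβj := hβ j (by omega) (by omega)
              have e1 := L2 p (by omega) (by omega)
              have e2 := L2 j hjq (by omega)
              have eβ := par hβq (hβ p hp1 hpn) hβj vq e1.symm e2.symm
              have h0 : (β p * α j - α p * β j) * (x j * y p) = 0 := by
                linear_combination α p * eβ - β p * eα
              have hne : β p * α j - α p * β j ≠ 0 := by
                intro h
                apply hαβ p j hp1 (by omega) (by omega)
                rw [inv_mul_eq_div, inv_mul_eq_div, div_eq_div_iff hαp (hβ p hp1 hpn)]
                linear_combination h
              have hxj : x j = 0 := mul3r (by linear_combination h0) hne hyp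
              have hyj : y j = 0 := by
                have h3 : α p * (x p * y j) = 0 := by rw [eα, hxj]; ring
                exact mul3r h3 hαp hxp
              exact ⟨hxj, hyj⟩
            · exact Zhi j h h2
end

section
/- Let d ≥ 4 be an even integer and let z₂, …, z_d ∈ ℂ with |z_j| = 1 for all j. Then P_d(z₂,…,z_d) = D* · P_d(−1, 1, −1, …, −1) · D, where D is the diagonal matrix with j-th diagonal entry (−1)^{j−1} z_j (with z₁ = 1), i.e. D = Diag(1, −z₂, z₃, −z₄, …, z_{d−1}, −z_d), D* is its conjugate transpose, and P_d(−1,1,…,−1) means P_d evaluated at z_j = (−1)^{j−1}. -/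
/-!
Every entry of `P_d(z)` is either constant or a ratio `z_b / z_a`, except the two corners, which
involve `z_d` alone because `z₁ = 1`. Hence conjugating by a unitary diagonal matrix
`D = diag(w₁, …, w_d)` with `w₁ = 1` multiplies each `z_j` by `w_j`. Taking
`w_j = (-1)^(j-1) z_j` turns `P_d(-1, 1, …)` into `P_d(z)`, since `((-1)^(j-1))² = 1`.
-/

open Matrix

/-- The matrix `P_d(z₂,…,z_d)` (with `z₁ = 1` supplied through the function `z`),
indexed by `Fin d`, where position `j : Fin d` corresponds to the 1-based index `j.val + 1`. -/
noncomputable def Pmat (d : ℕ) (z : ℕ → ℂ) : Matrix (Fin d) (Fin d) ℂ :=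
  Matrix.of fun j k =>
    let a := j.val + 1
    let b := k.val + 1
    if a = b then 2
    else if b = a + 1 then z b * (z a)⁻¹
    else if a = b + 1 then z b * (z a)⁻¹
    else if a = 1 ∧ b = d then z d
    else if a = d ∧ b = 1 then (z d)⁻¹
    else 0

theorem Pmat_mul_eq_conj_diagonal (d : ℕ) (w y : ℕ → ℂ) (hw1 : w 1 = 1)
    (hw : ∀ j : Fin d, ‖w (j + 1)‖ = 1) :
    Pmat d (fun j => w j * y j) =
      (diagonal fun j : Fin d => w (j + 1))ᴴ * Pmat d y * diagonal fun j : Fin d => w (j + 1) := by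
  ext j k
  have hstar : star (w (j + 1)) = (w (j + 1))⁻¹ := (Complex.inv_eq_conj (hw j)).symm
  rw [diagonal_conjTranspose, mul_diagonal, diagonal_mul]
  simp only [Pmat, of_apply, Pi.star_apply, hstar]
  split_ifs with hdiag _ _ hcorner hcorner'
  · have hw0 : w (k + 1) ≠ 0 := norm_ne_zero_iff.mp (by rw [hw k]; exact one_ne_zero)
    rw [hdiag]
    field_simp
  · rw [mul_inv]; ring
  · rw [mul_inv]; ring
  · rw [hcorner.1, hcorner.2, hw1, inv_one]; ring
  · rw [hcorner'.1, hcorner'.2, hw1, mul_inv]; ring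
  · simp

theorem stmt4_general (d : ℕ) (z : ℕ → ℂ)
    (hz1 : z 1 = 1) (hz : ∀ j, 2 ≤ j → j ≤ d → ‖z j‖ = 1) :
    Pmat d z =
      (Matrix.diagonal (fun j : Fin d => (-1 : ℂ) ^ j.val * z (j.val + 1)))ᴴ
        * Pmat d (fun j => (-1 : ℂ) ^ (j - 1))
        * Matrix.diagonal (fun j : Fin d => (-1 : ℂ) ^ j.val * z (j.val + 1)) := by
  set w : ℕ → ℂ := fun j => (-1) ^ (j - 1) * z j
  have hzw : z = fun j => w j * (-1) ^ (j - 1) := by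
    funext j
    rw [mul_right_comm, ← mul_pow, neg_one_mul, neg_neg, one_pow, one_mul]
  have hw : ∀ j : Fin d, ‖w (j + 1)‖ = 1 := by
    intro j
    rcases Nat.eq_zero_or_pos j.val with h0 | hpos
    · simp [w, h0, hz1]
    · simpa [w] using hz (j + 1) (by omega) j.isLt
  conv_lhs => rw [hzw]
  simpa only [w, Nat.add_sub_cancel] using Pmat_mul_eq_conj_diagonal d w _ (by simp [w, hz1]) hw

theorem stmt4 (d : ℕ) (hd : 4 ≤ d) (hde : Even d) (z : ℕ → ℂ)
    (hz1 : z 1 = 1) (hz : ∀ j, 2 ≤ j → j ≤ d → ‖z j‖ = 1) :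
    Pmat d z =
      (Matrix.diagonal (fun j : Fin d => (-1 : ℂ) ^ j.val * z (j.val + 1)))ᴴ
        * Pmat d (fun j => (-1 : ℂ) ^ (j - 1))
        * Matrix.diagonal (fun j : Fin d => (-1 : ℂ) ^ j.val * z (j.val + 1)) :=
  stmt4_general d z hz1 hz
end

section
/- Let d ≥ 4 be an even integer and let z₂, …, z_d ∈ ℂ with |z_j| = 1 for all j. Then the matrix P_d(z₂,…,z_d) is Hermitian positive semidefinite of rank d−1 (corank one), and its kernel is spanned by the vector whose j-th entry is (−1)^{j−1} z_j⁻¹ (with z₁ = 1), i.e. the vector (1, −z₂⁻¹, z₃⁻¹, −z₄⁻¹, …, −z_d⁻¹)ᵀ ∈ ℂ^d. -/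
/-!
Let `S` be the cyclic shift matrix and `w = (z₁, …, z_d)`. Conjugating by `diag w`,
`P_d = diag(w)⁻¹ (2 + S + S⁻¹) diag(w)`, and `2 + S + S⁻¹ = (1 + S)ᴴ (1 + S)`; since `|z_j| = 1`
we have `diag(w)⁻¹ = diag(w)ᴴ`, so `P_d = Bᴴ B` with `B = (1 + S) diag(w)`. Hence `P_d` is positive
semidefinite with `ker P_d = ker B`. Now `B x = 0` says that `y = diag(w) x` satisfies
`y_{j+1} = -y_j` cyclically, which for even `d` means that `y` is a multiple of `((-1)^j)_j`;
so the kernel is the line through `diag(w)⁻¹ ((-1)^j)_j` and the rank is `d - 1`.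
-/

open scoped ComplexOrder

open Matrix

lemma val_finRotate {d : ℕ} (j : Fin d) :
    (finRotate d j : ℕ) = if j.val + 1 = d then 0 else j.val + 1 := by
  obtain ⟨n, rfl⟩ : ∃ n, d = n + 1 := ⟨d - 1, by have := j.pos; omega⟩
  rw [coe_finRotate]
  simp [Fin.ext_iff]

section CycleShift

variable {R : Type*} [CommRing R]

lemma one_add_permMatrix_mulVec {n : Type*} [Fintype n] [DecidableEq n] (σ : Equiv.Perm n)
    (y : n → R) : (1 + σ.permMatrix R) *ᵥ y = y + y ∘ σ := by
  rw [add_mulVec, one_mulVec, permMatrix_mulVec]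

lemma conjTranspose_one_add_permMatrix_mul_self [StarRing R] {n : Type*} [Fintype n]
    [DecidableEq n] (σ : Equiv.Perm n) :
    (1 + σ.permMatrix R)ᴴ * (1 + σ.permMatrix R) = 2 + σ.permMatrix R + σ⁻¹.permMatrix R := by
  have hinv : σ⁻¹.permMatrix R * σ.permMatrix R = 1 := by
    rw [← permMatrix_mul, mul_inv_cancel, permMatrix_one]
  rw [conjTranspose_add, conjTranspose_one, conjTranspose_permMatrix, add_mul, mul_add, mul_add,
    hinv, one_mul, one_mul, mul_one, ← one_add_one_eq_two]
  abel

lemma eq_smul_neg_one_pow_of_finRotate {n : ℕ} {y : Fin (n + 1) → R}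
    (hy : ∀ j, y (finRotate (n + 1) j) = -y j) : y = y 0 • fun j => (-1 : R) ^ j.val := by
  funext j
  induction j using Fin.induction with
  | zero => simp
  | succ i ih =>
    rw [← Fin.coeSucc_eq_succ, ← finRotate_apply, hy, ih]
    simp [pow_succ]

lemma neg_one_pow_finRotate {d : ℕ} (hd : Even d) (j : Fin d) :
    (-1 : R) ^ (finRotate d j).val = -(-1) ^ j.val := by
  rw [val_finRotate]
  split_ifs with h
  · rw [pow_zero, (by omega : j.val = d - 1),
      (Nat.Even.sub_odd (by omega) hd odd_one).neg_one_pow, neg_neg]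
  · rw [pow_succ, mul_neg_one]

lemma one_add_permMatrix_finRotate_mulVec_eq_zero_iff {d : ℕ} (hd : Even d) (hd0 : 0 < d)
    (y : Fin d → R) :
    (1 + (finRotate d).permMatrix R) *ᵥ y = 0 ↔ ∃ c : R, y = c • fun j => (-1 : R) ^ j.val := by
  rw [one_add_permMatrix_mulVec]
  constructor
  · intro h
    obtain ⟨n, rfl⟩ : ∃ n, d = n + 1 := ⟨d - 1, by omega⟩
    exact ⟨y 0, eq_smul_neg_one_pow_of_finRotate fun j =>
      eq_neg_of_add_eq_zero_right (congrFun h j)⟩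
  · rintro ⟨c, rfl⟩
    ext j
    simp only [Pi.add_apply, Function.comp_apply, Pi.smul_apply, smul_eq_mul, Pi.zero_apply,
      neg_one_pow_finRotate hd]
    ring

end CycleShift

lemma Matrix.rank_eq_card_sub_one_of_mulVec_eq_zero_iff {m n K : Type*} [Fintype m] [Fintype n]
    [Field K] {A : Matrix m n K} {v : n → K} (hv : v ≠ 0)
    (hA : ∀ x, A *ᵥ x = 0 ↔ ∃ c : K, x = c • v) : A.rank = Fintype.card n - 1 := by
  have hker : LinearMap.ker A.mulVecLin = K ∙ v := by
    ext x
    simp only [LinearMap.mem_ker, mulVecLin_apply, hA, Submodule.mem_span_singleton, eq_comm]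
  have := LinearMap.finrank_range_add_finrank_ker A.mulVecLin
  rw [hker, finrank_span_singleton hv, Module.finrank_fintype_fun_eq_card] at this
  rw [Matrix.rank]
  omega

lemma Pmat_eq_diagonal_mul_mul_diagonal {d : ℕ} {z : ℕ → ℂ} (hd : 3 ≤ d) (hz1 : z 1 = 1)
    (hz0 : ∀ j : Fin d, z (j.val + 1) ≠ 0) :
    Pmat d z = diagonal (fun j : Fin d => (z (j.val + 1))⁻¹) *
      (2 + (finRotate d).permMatrix ℂ + (finRotate d)⁻¹.permMatrix ℂ) *
      diagonal (fun j : Fin d => z (j.val + 1)) := by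
  ext j k
  rw [mul_diagonal, diagonal_mul]
  simp only [Pmat, of_apply, Matrix.add_apply, ofNat_apply, PEquiv.toMatrix_apply,
    Equiv.toPEquiv_apply, Option.mem_def, Option.some.injEq, Equiv.Perm.inv_eq_iff_eq,
    Fin.ext_iff, val_finRotate]
  have hzj := hz0 j
  have hj := j.isLt
  have hk := k.isLt
  -- `3 ≤ d` keeps the shifts `S` and `S⁻¹` apart, so each entry falls in exactly one case.
  split_ifs <;> first
    | omega
    | (push_cast; ring1)
    | (rw [show k.val + 1 = j.val + 1 by omega, Nat.cast_ofNat, add_zero, add_zero, mul_comm,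
        mul_inv_cancel_left₀ hzj])
    | (rw [show j.val + 1 = 1 by omega, show k.val + 1 = d by omega, hz1]; push_cast; ring1)
    | (rw [show j.val + 1 = d by omega, show k.val + 1 = 1 by omega, hz1]; push_cast; ring1)

noncomputable def Pfactor (d : ℕ) (z : ℕ → ℂ) : Matrix (Fin d) (Fin d) ℂ :=
  (1 + (finRotate d).permMatrix ℂ) * diagonal fun j => z (j.val + 1)

lemma Pmat_eq_conjTranspose_mul_self {d : ℕ} {z : ℕ → ℂ} (hd : 3 ≤ d) (hz1 : z 1 = 1)
    (hz : ∀ j : Fin d, ‖z (j.val + 1)‖ = 1) :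
    Pmat d z = (Pfactor d z)ᴴ * Pfactor d z := by
  have hz0 (j : Fin d) : z (j.val + 1) ≠ 0 := norm_ne_zero_iff.mp (by rw [hz j]; exact one_ne_zero)
  have hstar : star (fun j : Fin d => z (j.val + 1)) = fun j => (z (j.val + 1))⁻¹ :=
    funext fun j => (Complex.inv_eq_conj (hz j)).symm
  rw [Pfactor, conjTranspose_mul, diagonal_conjTranspose, hstar, Matrix.mul_assoc,
    ← Matrix.mul_assoc (1 + _)ᴴ, conjTranspose_one_add_permMatrix_mul_self, ← Matrix.mul_assoc]
  exact Pmat_eq_diagonal_mul_mul_diagonal hd hz1 hz0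

lemma Pfactor_mulVec_eq_zero_iff {d : ℕ} {z : ℕ → ℂ} (hd : Even d) (hd0 : 0 < d)
    (hz0 : ∀ j : Fin d, z (j.val + 1) ≠ 0) (x : Fin d → ℂ) :
    Pfactor d z *ᵥ x = 0 ↔
      ∃ c : ℂ, x = c • fun j : Fin d => (-1 : ℂ) ^ j.val * (z (j.val + 1))⁻¹ := by
  rw [Pfactor, ← mulVec_mulVec, funext (mulVec_diagonal _ x),
    one_add_permMatrix_finRotate_mulVec_eq_zero_iff hd hd0]
  simp only [funext_iff, Pi.smul_apply, smul_eq_mul]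
  refine exists_congr fun c => forall_congr' fun j => ?_
  rw [← mul_assoc, eq_mul_inv_iff_mul_eq₀ (hz0 j), mul_comm]

theorem stmt5 (d : ℕ) (hd : 4 ≤ d) (hde : Even d) (z : ℕ → ℂ)
    (hz1 : z 1 = 1) (hz : ∀ j, 2 ≤ j → j ≤ d → ‖z j‖ = 1) :
    (Pmat d z).PosSemidef ∧ (Pmat d z).rank = d - 1 ∧
    ∀ x : Fin d → ℂ, (Pmat d z).mulVec x = 0 ↔
      ∃ c : ℂ, x = c • (fun j : Fin d => (-1 : ℂ) ^ j.val * (z (j.val + 1))⁻¹) := by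
  have hz' (j : Fin d) : ‖z (j.val + 1)‖ = 1 := by
    rcases Nat.eq_zero_or_pos j.val with h | h
    · rw [h, zero_add, hz1, norm_one]
    · exact hz _ (by omega) (by omega)
  have hz0 (j : Fin d) : z (j.val + 1) ≠ 0 := norm_ne_zero_iff.mp (by rw [hz' j]; exact one_ne_zero)
  have hP := Pmat_eq_conjTranspose_mul_self (by omega) hz1 hz'
  have hker (x : Fin d → ℂ) : Pmat d z *ᵥ x = 0 ↔
      ∃ c : ℂ, x = c • fun j : Fin d => (-1 : ℂ) ^ j.val * (z (j.val + 1))⁻¹ := by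
    rw [hP, conjTranspose_mul_self_mulVec_eq_zero]
    exact Pfactor_mulVec_eq_zero_iff hde (by omega) hz0 x
  have hv : (fun j : Fin d => (-1 : ℂ) ^ j.val * (z (j.val + 1))⁻¹) ≠ 0 := fun h => by
    simpa [hz1] using congrFun h ⟨0, by omega⟩
  refine ⟨hP ▸ posSemidef_conjTranspose_mul_self _, ?_, hker⟩
  rw [rank_eq_card_sub_one_of_mulVec_eq_zero_iff hv hker, Fintype.card_fin]
end

section
/- Let n ≥ 2 and let k, ℓ be nonnegative integers with k + ℓ = 2n − 2. Then ∑_{r=0}^{n−1} (−1)^r · C(k, r) · C(ℓ, n−1−r) = 0 if and only if both k and ℓ are odd. -/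
open Polynomial Finset


lemma coeff_one_sub_X_pow (k : ℕ) : ∀ r, ((1 - X : ℤ[X])^k).coeff r = (-1)^r * k.choose r := by
  induction k with
  | zero =>
    intro r
    rcases r with _ | r <;> simp [Polynomial.coeff_one]
  | succ k ih =>
    intro r
    have h : (1 - X : ℤ[X])^(k+1) = (1 - X)^k - (1 - X)^k * X := by ring
    rcases r with _ | r
    · simp [h, ih 0]
    · rw [h, Polynomial.coeff_sub, Polynomial.coeff_mul_X, ih, ih,
        Nat.choose_succ_succ, Nat.cast_add]
      ring

lemma coeffQ (k l m : ℕ) :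
    ((1 - X : ℤ[X])^k * (1 + X)^l).coeff m
      = ∑ r ∈ range (m+1), (-1 : ℤ)^r * k.choose r * l.choose (m - r) := by
  rw [Polynomial.coeff_mul, Finset.Nat.sum_antidiagonal_eq_sum_range_succ_mk]
  refine Finset.sum_congr rfl fun r _ => ?_
  rw [coeff_one_sub_X_pow, Polynomial.coeff_one_add_X_pow]

noncomputable def f (a b : ℕ) : ℤ := ((1 - X : ℤ[X])^(2*a) * (1 + X)^(2*b)).coeff (a + b)

lemma f_rec (a b : ℕ) : f (a+1) b = f a (b+1) - 4 * f a b := by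
  have key : ((1 - X : ℤ[X])^(2*(a+1)) * (1 + X)^(2*b))
      = (1 - X)^(2*a) * (1 + X)^(2*(b+1)) - (Polynomial.C 4) * ((1 - X)^(2*a) * (1 + X)^(2*b) * X) := by
    have h2 : (1 - X : ℤ[X])^2 = (1 + X)^2 - (Polynomial.C 4) * X := by
      simp only [map_ofNat]
      ring
    calc ((1 - X : ℤ[X])^(2*(a+1)) * (1 + X)^(2*b))
        = (1-X)^(2*a) * (1+X)^(2*b) * ((1-X)^2) := by ring
      _ = (1-X)^(2*a) * (1+X)^(2*b) * ((1 + X)^2 - (Polynomial.C 4) * X) := by rw [h2]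
      _ = _ := by ring
  unfold f
  rw [key, Polynomial.coeff_sub, Polynomial.coeff_C_mul]
  have : (a + 1 + b) = (a + b) + 1 := by omega
  rw [this]
  have hx : ((1 - X : ℤ[X])^(2*a) * (1 + X)^(2*b) * X).coeff ((a+b) + 1) 
      = ((1 - X : ℤ[X])^(2*a) * (1 + X)^(2*b)).coeff (a + b) := by
    rw [Polynomial.coeff_mul_X]
  have h2 : (a + (b+1)) = (a+b)+1 := by omega
  rw [h2, hx]

lemma f_zero (b : ℕ) : f 0 b = (2*b).choose b := by
  unfold f
  simp [Polynomial.coeff_one_add_X_pow]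

lemma fact_id (a b : ℕ) :
    (a.factorial * b.factorial * (a+b).factorial : ℤ) * ((-1)^a * f a b)
      = (2*a).factorial * (2*b).factorial := by
  induction a generalizing b with
  | zero =>
    rw [f_zero]
    have h := Nat.choose_mul_factorial_mul_factorial (Nat.le_mul_of_pos_left b (by norm_num : 0 < 2))
    have h2 : 2 * b - b = b := by omega
    rw [h2] at h
    push_cast [← h]
    ring
  | succ a ih =>
    have h1 := ih b
    have h2 := ih (b+1)
    rw [f_rec]
    have e1 : ((a+1).factorial : ℤ) = (a+1) * a.factorial := by
      push_cast [Nat.factorial_succ]; ring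
    have e2 : ((a+1+b).factorial : ℤ) = (a+b+1) * (a+b).factorial := by
      have : a+1+b = (a+b)+1 := by omega
      rw [this]; push_cast [Nat.factorial_succ]; ring
    have e3 : ((2*(a+1)).factorial : ℤ) = (2*a+2) * ((2*a+1) * (2*a).factorial) := by
      have : 2*(a+1) = (2*a+1)+1 := by omega
      rw [this, Nat.factorial_succ, Nat.factorial_succ]; push_cast; ring
    have e4 : ((2*(b+1)).factorial : ℤ) = (2*b+2) * ((2*b+1) * (2*b).factorial) := by
      have : 2*(b+1) = (2*b+1)+1 := by omega
      rw [this, Nat.factorial_succ, Nat.factorial_succ]; push_cast; ring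
    have e5 : ((b+1).factorial : ℤ) = (b+1) * b.factorial := by
      push_cast [Nat.factorial_succ]; ring
    have e6 : ((a+(b+1)).factorial : ℤ) = (a+b+1) * (a+b).factorial := by
      have : a+(b+1) = (a+b)+1 := by omega
      rw [this]; push_cast [Nat.factorial_succ]; ring
    rw [e5, e6, e4] at h2
    -- goal: (a+1)! * b! * (a+1+b)! * ((-1)^(a+1) * (f a (b+1) - 4 * f a b)) = (2(a+1))! (2b)!
    have hb1 : (0:ℤ) < (b:ℤ) + 1 := by positivity
    apply mul_left_cancel₀ (ne_of_gt hb1)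
    rw [e1, e2, e3]
    have hsign : ((-1:ℤ))^(a+1) = -(-1)^a := by rw [pow_succ]; ring
    rw [hsign]
    linear_combination (4*((a:ℤ)+1)*(a+b+1)*(b+1)) * h1 - ((a:ℤ)+1) * h2


lemma odd_sum_zero (k l m : ℕ) (hk : Odd k) (hl : Odd l) (hkl : k + l = 2 * m) :
    ∑ r ∈ range (m+1), (-1 : ℤ)^r * k.choose r * l.choose (m - r) = 0 := by
  set T : Finset ℕ := (range (m+1)).filter (fun r => k - m ≤ r ∧ r ≤ k) with hT
  have hsub : ∑ r ∈ range (m+1), (-1 : ℤ)^r * k.choose r * l.choose (m - r)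
      = ∑ r ∈ T, (-1 : ℤ)^r * k.choose r * l.choose (m - r) := by
    rw [hT, Finset.sum_filter]
    refine Finset.sum_congr rfl fun r hr => ?_
    rw [Finset.mem_range] at hr
    by_cases h : k - m ≤ r ∧ r ≤ k
    · simp [h]
    · simp only [h, if_false]
      rcases not_and_or.mp h with h1 | h1
      · -- r < k - m, so m - r > l, choose = 0
        have : l < m - r := by omega
        rw [Nat.choose_eq_zero_of_lt this]
        ring
      · have : k < r := by omega
        rw [Nat.choose_eq_zero_of_lt this]
        ring
  rw [hsub]
  apply Finset.sum_involution (g := fun r _ => k - r)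
  · intro r hr
    rw [hT, Finset.mem_filter, Finset.mem_range] at hr
    obtain ⟨hr1, hr2, hr3⟩ := hr
    -- term r + term (k - r) = 0
    have hc1 : k.choose (k - r) = k.choose r := Nat.choose_symm hr3
    have hc2 : l.choose (m - (k - r)) = l.choose (m - r) := by
      have hmr : m - r ≤ l := by omega
      have := Nat.choose_symm hmr
      have he : l - (m - r) = m - (k - r) := by omega
      rw [he] at this
      exact this
    rw [hc1, hc2]
    have hsign : ((-1 : ℤ))^(k - r) = -(-1)^r := by
      have hkr : (k - r) + r = k := by omega
      have h2 : ((-1:ℤ))^(k-r) * (-1)^r = -1 := by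
        rw [← pow_add, hkr]; exact Odd.neg_one_pow hk
      have hrr : ((-1:ℤ))^r * (-1)^r = 1 := by
        rw [← pow_add]; exact Even.neg_one_pow ⟨r, rfl⟩
      calc ((-1:ℤ))^(k-r) = (-1)^(k-r) * ((-1)^r * (-1)^r) := by rw [hrr, mul_one]
        _ = ((-1)^(k-r) * (-1)^r) * (-1)^r := by ring
        _ = -(-1)^r := by rw [h2]; ring
    rw [hsign]
    ring
  · intro r hr hne
    rw [hT, Finset.mem_filter, Finset.mem_range] at hr
    intro heq
    -- k - r = r means k = 2r, contradicting k odd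
    obtain ⟨hk', hparity⟩ := hk
    omega
  · intro r hr
    rw [hT, Finset.mem_filter, Finset.mem_range] at hr ⊢
    omega
  · intro r hr
    rw [hT, Finset.mem_filter, Finset.mem_range] at hr
    omega


lemma f_eq_sum (a b : ℕ) :
    f a b = ∑ r ∈ range (a+b+1), (-1 : ℤ)^r * (2*a).choose r * (2*b).choose (a+b - r) := by
  unfold f
  rw [coeffQ]

lemma f_ne_zero (a b : ℕ) : f a b ≠ 0 := by
  intro h
  have := fact_id a b
  rw [h] at this
  simp only [mul_zero] at this
  have h1 : 0 < ((2*a).factorial : ℤ) * (2*b).factorial := by positivity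
  omega

theorem stmt7 (n k l : ℕ) (hn : 2 ≤ n) (hkl : k + l = 2 * n - 2) :
    (∑ r ∈ Finset.range n, (-1 : ℤ) ^ r * (k.choose r) * (l.choose (n - 1 - r)) = 0) ↔
    (Odd k ∧ Odd l) := by
  obtain ⟨m, hm⟩ : ∃ m, n = m + 1 := ⟨n - 1, by omega⟩
  subst hm
  have hkl' : k + l = 2 * m := by omega
  have hsum : ∑ r ∈ Finset.range (m+1), (-1 : ℤ) ^ r * (k.choose r) * (l.choose (m + 1 - 1 - r))
      = ∑ r ∈ Finset.range (m+1), (-1 : ℤ) ^ r * (k.choose r) * (l.choose (m - r)) := by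
    refine Finset.sum_congr rfl fun r _ => ?_
    congr 2
  rw [hsum]
  constructor
  · intro hS
    by_contra hcon
    -- k and l have the same parity
    have hpar : Even k ∧ Even l := by
      rcases Nat.even_or_odd k with hk | hk <;> rcases Nat.even_or_odd l with hl | hl
      · exact ⟨hk, hl⟩
      · exfalso; obtain ⟨x, hx⟩ := hk; obtain ⟨y, hy⟩ := hl; omega
      · exfalso; obtain ⟨x, hx⟩ := hk; obtain ⟨y, hy⟩ := hl; omega
      · exact absurd ⟨hk, hl⟩ hcon
    obtain ⟨⟨a, ha⟩, ⟨b, hb⟩⟩ := hpar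
    have hk2 : k = 2 * a := by omega
    have hl2 : l = 2 * b := by omega
    have hab : a + b = m := by omega
    subst hk2 hl2
    have := f_eq_sum a b
    rw [hab] at this
    rw [← this] at hS
    exact f_ne_zero a b hS
  · rintro ⟨hk, hl⟩
    exact odd_sum_zero k l m hk hl hkl'
end

section
/- Let α ∈ ℂ with |α| = 1 and −π/4 < Arg α < π/4 (equivalently Re α > |Im α|). Then the 4×4 matrix A = [[α+conj(α), −α, −conj(α), 0], [−conj(α), α+conj(α), 0, −α], [−α, 0, α+conj(α), −conj(α)], [0, −conj(α), −α, α+conj(α)]] is Hermitian positive semidefinite of rank 3 (corank one), and its kernel is spanned by the vector (1, 1, 1, 1)ᵀ ∈ ℂ⁴. -/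
/-!
Up to reordering the vertices as 0, 1, 3, 2, the matrix is the magnetic Laplacian of the 4-cycle
with phase α on every edge, a twisted circulant. The discrete Fourier transform along the cycle
diagonalises it: for a fourth root of unity ω the coefficient `x 0 + ω x 1 + ω² x 3 + ω³ x 2`
carries the eigenvalue `2 Re α - 2 Re (α conj ω)`, which is `0` for `ω = 1` and
`2 (Re α - Im α)`, `4 Re α`, `2 (Re α + Im α)` for `ω = I, -1, -I`. When `|Arg α| < π/4`
these three are positive, so the quadratic form is a positive combination of three squared
Fourier coefficients; it vanishes exactly on the constant vectors, and the rank is `4 - 1`.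
-/

open scoped ComplexOrder ComplexConjugate
open Complex Matrix

theorem Real.sin_lt_cos_of_abs_lt_pi_div_four {t : ℝ} (ht : |t| < Real.pi / 4) :
    Real.sin t < Real.cos t := by
  have hπ := Real.pi_pos
  obtain ⟨ht₁, ht₂⟩ := abs_lt.mp ht
  calc Real.sin t < Real.sin (Real.pi / 4) :=
        Real.sin_lt_sin_of_lt_of_le_pi_div_two (by linarith) (by linarith) ht₂
    _ = Real.cos (Real.pi / 4) := by rw [Real.sin_pi_div_four, Real.cos_pi_div_four]
    _ < Real.cos |t| :=
        Real.cos_lt_cos_of_nonneg_of_le_pi_div_two (abs_nonneg t) (by linarith) ht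
    _ = Real.cos t := Real.cos_abs t

theorem Complex.abs_im_lt_re_of_abs_arg_lt_pi_div_four {z : ℂ} (hz : z ≠ 0)
    (h : |arg z| < Real.pi / 4) : |z.im| < z.re := by
  have hnorm : 0 < ‖z‖ := norm_pos_iff.mpr hz
  rw [← norm_mul_cos_arg, ← norm_mul_sin_arg, abs_mul, abs_of_pos hnorm]
  refine mul_lt_mul_of_pos_left (abs_lt.mpr ⟨?_, Real.sin_lt_cos_of_abs_lt_pi_div_four h⟩) hnorm
  have := Real.sin_lt_cos_of_abs_lt_pi_div_four (t := -arg z) (by rwa [abs_neg])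
  rw [Real.sin_neg, Real.cos_neg] at this
  linarith

theorem Matrix.rank_add_one_eq_card_of_mulVec_eq_zero_iff {K n : Type*} [Field K] [Fintype n]
    {A : Matrix n n K} {v : n → K} (hv : v ≠ 0)
    (hker : ∀ x, A *ᵥ x = 0 ↔ ∃ c : K, x = c • v) :
    A.rank + 1 = Fintype.card n := by
  have hker' : LinearMap.ker A.mulVecLin = K ∙ v := by
    ext x
    simp only [LinearMap.mem_ker, mulVecLin_apply, hker, Submodule.mem_span_singleton, eq_comm]
  have := LinearMap.finrank_range_add_finrank_ker A.mulVecLin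
  rwa [hker', finrank_span_singleton hv, Module.finrank_fintype_fun_eq_card] at this

def magneticCycleLaplacian (α : ℂ) : Matrix (Fin 4) (Fin 4) ℂ :=
  !![α + conj α, -α, -conj α, 0;
     -conj α, α + conj α, 0, -α;
     -α, 0, α + conj α, -conj α;
     0, -conj α, -α, α + conj α]

def cycleFourierCoeff (ω : ℂ) (x : Fin 4 → ℂ) : ℂ :=
  x 0 + ω * x 1 + ω ^ 2 * x 3 + ω ^ 3 * x 2

namespace magneticCycleLaplacian

theorem isHermitian (α : ℂ) : (magneticCycleLaplacian α).IsHermitian := by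
  ext i j
  fin_cases i <;> fin_cases j <;> simp [magneticCycleLaplacian] <;> ring

theorem mulVec_const (α c : ℂ) : magneticCycleLaplacian α *ᵥ (c • ![1, 1, 1, 1]) = 0 := by
  ext i
  fin_cases i <;> simp [magneticCycleLaplacian, mulVec, dotProduct, Fin.sum_univ_four] <;> ring

theorem dotProduct_mulVec (α : ℂ) (x : Fin 4 → ℂ) :
    star x ⬝ᵥ magneticCycleLaplacian α *ᵥ x =
      (((α.re - α.im) * normSq (cycleFourierCoeff I x)
        + 2 * α.re * normSq (cycleFourierCoeff (-1) x)
        + (α.re + α.im) * normSq (cycleFourierCoeff (-I) x)) / 2 : ℝ) := by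
  have hre : (α.re : ℂ) = (α + conj α) / 2 := by rw [add_conj]; push_cast; ring
  have him : (α.im : ℂ) = (α - conj α) / (2 * I) := by
    rw [sub_conj]; push_cast; field_simp
  push_cast
  simp only [← mul_conj, hre, him, cycleFourierCoeff, magneticCycleLaplacian, mulVec, dotProduct,
    Fin.sum_univ_four, Pi.star_apply, RCLike.star_def, of_apply, cons_val', cons_val_zero,
    cons_val_one, cons_val_two, cons_val_three, head_cons, tail_cons, empty_val',
    cons_val_fin_one, head_fin_const, map_add, map_mul, map_pow, map_neg, conj_I, map_one]
  field_simp
  simp only [I_sq, I_pow_three]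
  ring_nf
  simp only [I_pow_three]
  ring

theorem eq_smul_ones_of_cycleFourierCoeff_eq_zero {x : Fin 4 → ℂ}
    (h₁ : cycleFourierCoeff I x = 0) (h₂ : cycleFourierCoeff (-1) x = 0)
    (h₃ : cycleFourierCoeff (-I) x = 0) : x = x 0 • ![1, 1, 1, 1] := by
  simp only [cycleFourierCoeff, I_sq, I_pow_three, neg_sq, Odd.neg_pow (by decide : Odd 3)]
    at h₁ h₂ h₃
  have hx₁ : x 1 = x 0 := by
    linear_combination (-(1 + I) / 4) * h₁ - h₂ / 2 + (-(1 - I) / 4) * h₃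
      + ((x 1 - x 2) / 2) * I_sq
  have hx₂ : x 2 = x 0 := by
    linear_combination ((I - 1) / 4) * h₁ - h₂ / 2 + ((-I - 1) / 4) * h₃
      + ((x 2 - x 1) / 2) * I_sq
  have hx₃ : x 3 = x 0 := by linear_combination -h₁ / 2 - h₃ / 2
  ext i
  fin_cases i <;> simp [hx₁, hx₂, hx₃]

theorem posSemidef_of_abs_im_le_re {α : ℂ} (h : |α.im| ≤ α.re) :
    (magneticCycleLaplacian α).PosSemidef := by
  refine .of_dotProduct_mulVec_nonneg (isHermitian α) fun x ↦ ?_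
  obtain ⟨h₁, h₂⟩ := abs_le.mp h
  rw [dotProduct_mulVec, zero_le_real]
  have := mul_nonneg (sub_nonneg.mpr h₂) (normSq_nonneg (cycleFourierCoeff I x))
  have := mul_nonneg (by linarith : 0 ≤ 2 * α.re) (normSq_nonneg (cycleFourierCoeff (-1) x))
  have := mul_nonneg (neg_le_iff_add_nonneg.mp h₁) (normSq_nonneg (cycleFourierCoeff (-I) x))
  linarith

theorem mulVec_eq_zero_iff {α : ℂ} (h : |α.im| < α.re) (x : Fin 4 → ℂ) :
    magneticCycleLaplacian α *ᵥ x = 0 ↔ ∃ c : ℂ, x = c • ![1, 1, 1, 1] := by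
  refine ⟨fun hx ↦ ⟨x 0, ?_⟩, fun ⟨c, hc⟩ ↦ hc ▸ mulVec_const α c⟩
  obtain ⟨h₁, h₂⟩ := abs_lt.mp h
  have hq := dotProduct_mulVec α x
  rw [hx, dotProduct_zero, eq_comm, ofReal_eq_zero] at hq
  have n₁ := normSq_nonneg (cycleFourierCoeff I x)
  have n₂ := normSq_nonneg (cycleFourierCoeff (-1) x)
  have n₃ := normSq_nonneg (cycleFourierCoeff (-I) x)
  apply eq_smul_ones_of_cycleFourierCoeff_eq_zero <;> rw [← normSq_eq_zero] <;> nlinarith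

end magneticCycleLaplacian

theorem stmt16 (α : ℂ) (hα : ‖α‖ = 1)
    (harg1 : -(Real.pi / 4) < Complex.arg α) (harg2 : Complex.arg α < Real.pi / 4) :
    (!![α + (starRingEnd ℂ) α, -α, -(starRingEnd ℂ) α, 0;
        -(starRingEnd ℂ) α, α + (starRingEnd ℂ) α, 0, -α;
        -α, 0, α + (starRingEnd ℂ) α, -(starRingEnd ℂ) α;
        0, -(starRingEnd ℂ) α, -α, α + (starRingEnd ℂ) α] :
      Matrix (Fin 4) (Fin 4) ℂ).PosSemidef ∧
    (!![α + (starRingEnd ℂ) α, -α, -(starRingEnd ℂ) α, 0;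
        -(starRingEnd ℂ) α, α + (starRingEnd ℂ) α, 0, -α;
        -α, 0, α + (starRingEnd ℂ) α, -(starRingEnd ℂ) α;
        0, -(starRingEnd ℂ) α, -α, α + (starRingEnd ℂ) α] :
      Matrix (Fin 4) (Fin 4) ℂ).rank = 3 ∧
    ∀ x : Fin 4 → ℂ,
      (!![α + (starRingEnd ℂ) α, -α, -(starRingEnd ℂ) α, 0;
          -(starRingEnd ℂ) α, α + (starRingEnd ℂ) α, 0, -α;
          -α, 0, α + (starRingEnd ℂ) α, -(starRingEnd ℂ) α;
          0, -(starRingEnd ℂ) α, -α, α + (starRingEnd ℂ) α] :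
        Matrix (Fin 4) (Fin 4) ℂ).mulVec x = 0 ↔
      ∃ c : ℂ, x = c • ![1, 1, 1, 1] := by
  have hα₀ : α ≠ 0 := norm_ne_zero_iff.mp (hα ▸ one_ne_zero)
  have h : |α.im| < α.re :=
    abs_im_lt_re_of_abs_arg_lt_pi_div_four hα₀ (abs_lt.mpr ⟨harg1, harg2⟩)
  have hker := magneticCycleLaplacian.mulVec_eq_zero_iff h
  refine ⟨magneticCycleLaplacian.posSemidef_of_abs_im_le_re h.le, ?_, hker⟩
  have hrank :=
    rank_add_one_eq_card_of_mulVec_eq_zero_iff (by simp : ![(1 : ℂ), 1, 1, 1] ≠ 0) hker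
  rw [Fintype.card_fin] at hrank
  exact Nat.add_right_cancel hrank
end

section
/- Let p > 0 and 0 < r < 1 be real and let α ∈ ℂ with |α| = 1. Then the 4×4 matrix B = r·[[1/p, 0, −conj(α), 0], [0, 1/p, 0, −conj(α)], [−α, 0, p, 0], [0, −α, 0, p]] + r·[[1, −1, 0, 0], [−1, 1, 0, 0], [0, 0, 1, −1], [0, 0, −1, 1]] is Hermitian positive semidefinite of rank 3 (corank one), and its kernel is spanned by the vector (p, p, α, α)ᵀ ∈ ℂ⁴. -/
/-!
Write `p = q ^ 2`. Then `B = r • Wᴴ * W`, where the first two rows of `W` are `(1/q, -q ᾱ)` placed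
on the coordinates `{0, 2}` and `{1, 3}` (their Gram matrix is the first summand of `B / r`, using
`|α| = 1`) and the last two rows are `e₀ - e₁` and `e₂ - e₃` (whose Gram matrix is the second
summand). Hence `B` is positive semidefinite and `ker B = ker W`, a linear system whose solutions
are the multiples of `(p, p, α, α)`; rank–nullity gives the rank.
-/

open scoped ComplexOrder
open scoped Matrix

/-- The matrix `B` of the Section-7 construction. -/
noncomputable def Bmat (p r : ℝ) (α : ℂ) : Matrix (Fin 4) (Fin 4) ℂ :=
  (r : ℂ) • !![1 / (p : ℂ), 0, -(starRingEnd ℂ) α, 0;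
               0, 1 / (p : ℂ), 0, -(starRingEnd ℂ) α;
               -α, 0, (p : ℂ), 0;
               0, -α, 0, (p : ℂ)] +
  (r : ℂ) • !![1, -1, 0, 0;
               -1, 1, 0, 0;
               0, 0, 1, -1;
               0, 0, -1, 1]

theorem Matrix.rank_add_one_eq_card_of_ker_eq_span_singleton {K m n : Type*} [Field K]
    [Fintype n] {A : Matrix m n K} {v : n → K} (hv : v ≠ 0)
    (hker : ∀ x, A *ᵥ x = 0 ↔ ∃ c : K, x = c • v) :
    A.rank + 1 = Fintype.card n := by
  have hker' : LinearMap.ker A.mulVecLin = K ∙ v := by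
    ext x
    simp only [LinearMap.mem_ker, Matrix.mulVecLin_apply, hker, Submodule.mem_span_singleton,
      eq_comm]
  rw [← Module.finrank_fintype_fun_eq_card K,
    ← LinearMap.finrank_range_add_finrank_ker A.mulVecLin, hker', finrank_span_singleton hv]
  rfl

noncomputable def Wmat (q : ℝ) (α : ℂ) : Matrix (Fin 4) (Fin 4) ℂ :=
  !![1 / (q : ℂ), 0, -(q : ℂ) * starRingEnd ℂ α, 0;
     0, 1 / (q : ℂ), 0, -(q : ℂ) * starRingEnd ℂ α;
     1, -1, 0, 0;
     0, 0, 1, -1]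

theorem Bmat_sq_eq_smul_conjTranspose_mul_self {q r : ℝ} {α : ℂ} (hq : q ≠ 0)
    (hα : ‖α‖ = 1) :
    Bmat (q ^ 2) r α = (r : ℂ) • ((Wmat q α)ᴴ * Wmat q α) := by
  have hq' : (q : ℂ) ≠ 0 := by exact_mod_cast hq
  ext i j
  fin_cases i <;> fin_cases j <;>
    simp [Bmat, Wmat, Matrix.mul_apply, Fin.sum_univ_four] <;>
    field_simp <;> simp [mul_assoc, Complex.mul_conj', hα]

theorem Wmat_mulVec_eq_zero_iff {q : ℝ} {α : ℂ} (hq : q ≠ 0) (hα : ‖α‖ = 1) (x : Fin 4 → ℂ) :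
    Wmat q α *ᵥ x = 0 ↔ ∃ c : ℂ, x = c • ![((q ^ 2 : ℝ) : ℂ), ((q ^ 2 : ℝ) : ℂ), α, α] := by
  have hq' : (q : ℂ) ≠ 0 := by exact_mod_cast hq
  have hαα : starRingEnd ℂ α * α = 1 := by
    rw [Complex.conj_mul', hα]; norm_num
  constructor
  · intro h
    have row : ∀ i, (Wmat q α *ᵥ x) i = 0 := fun i ↦ congrFun h i
    have h0 : (q : ℂ)⁻¹ * x 0 - q * starRingEnd ℂ α * x 2 = 0 := by
      simpa [Wmat, Matrix.mulVec, dotProduct, Fin.sum_univ_four, sub_eq_add_neg] using row 0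
    have h2 : x 0 - x 1 = 0 := by
      simpa [Wmat, Matrix.mulVec, dotProduct, Fin.sum_univ_four, sub_eq_add_neg] using row 2
    have h3 : x 2 - x 3 = 0 := by
      simpa [Wmat, Matrix.mulVec, dotProduct, Fin.sum_univ_four, sub_eq_add_neg] using row 3
    have hx0 : x 0 = q ^ 2 * (starRingEnd ℂ α * x 2) := by
      field_simp at h0
      linear_combination h0
    refine ⟨starRingEnd ℂ α * x 2, ?_⟩
    ext i
    fin_cases i <;> simp only [Fin.zero_eta, Fin.mk_one, Fin.reduceFinMk, Fin.isValue,
      Complex.ofReal_pow, Pi.smul_apply, Matrix.cons_val, Matrix.cons_val_zero,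
      Matrix.cons_val_one, smul_eq_mul]
    · linear_combination hx0
    · linear_combination hx0 - h2
    · linear_combination -x 2 * hαα
    · linear_combination -x 2 * hαα - h3
  · rintro ⟨c, rfl⟩
    ext i
    fin_cases i <;> simp [Wmat, Matrix.mulVec, dotProduct, Fin.sum_univ_four] <;> field_simp <;>
      simp [hαα]

theorem Bmat_sq_mulVec_eq_zero_iff {q r : ℝ} {α : ℂ} (hq : q ≠ 0) (hr : r ≠ 0) (hα : ‖α‖ = 1)
    (x : Fin 4 → ℂ) :
    Bmat (q ^ 2) r α *ᵥ x = 0 ↔ ∃ c : ℂ, x = c • ![((q ^ 2 : ℝ) : ℂ), ((q ^ 2 : ℝ) : ℂ), α, α] := by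
  rw [Bmat_sq_eq_smul_conjTranspose_mul_self hq hα, Matrix.smul_mulVec, smul_eq_zero,
    Matrix.conjTranspose_mul_self_mulVec_eq_zero, Wmat_mulVec_eq_zero_iff hq hα]
  simp [hr]

theorem stmt17_general (p r : ℝ) (hp : 0 < p) (hr0 : 0 < r)
    (α : ℂ) (hα : ‖α‖ = 1) :
    (Bmat p r α).PosSemidef ∧ (Bmat p r α).rank = 3 ∧
    ∀ x : Fin 4 → ℂ,
      (Bmat p r α).mulVec x = 0 ↔ ∃ c : ℂ, x = c • ![(p : ℂ), (p : ℂ), α, α] := by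
  obtain ⟨q, hq, rfl⟩ : ∃ q : ℝ, q ≠ 0 ∧ q ^ 2 = p := ⟨√p, by positivity, Real.sq_sqrt hp.le⟩
  have hker := Bmat_sq_mulVec_eq_zero_iff hq hr0.ne' hα
  refine ⟨?_, ?_, hker⟩
  · rw [Bmat_sq_eq_smul_conjTranspose_mul_self hq hα]
    exact (Matrix.posSemidef_conjTranspose_mul_self _).smul (by exact_mod_cast hr0.le)
  · have hv : ![((q ^ 2 : ℝ) : ℂ), ((q ^ 2 : ℝ) : ℂ), α, α] ≠ 0 := fun h ↦ by
      simpa [hq] using congrFun h 0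
    have := Matrix.rank_add_one_eq_card_of_ker_eq_span_singleton hv hker
    simp only [Fintype.card_fin] at this
    omega

theorem stmt17 (p r : ℝ) (hp : 0 < p) (hr0 : 0 < r) (hr1 : r < 1)
    (α : ℂ) (hα : ‖α‖ = 1) :
    (Bmat p r α).PosSemidef ∧ (Bmat p r α).rank = 3 ∧
    ∀ x : Fin 4 → ℂ,
      (Bmat p r α).mulVec x = 0 ↔ ∃ c : ℂ, x = c • ![(p : ℂ), (p : ℂ), α, α] :=
  stmt17_general p r hp hr0 α hα
end
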